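/- arXiv:math/9207214 — 2 statements merged into one kernel-verified Lean document; each statement's English description precedes it below -/
import Mathlib

section
/- The squares S⁺_{n,k} are pairwise disjoint: if (n, k) ≠ (m, j) with n, m ∈ ℕ and k, j ∈ ℤ, then S⁺_{n,k} ∩ S⁺_{m,j} = ∅. -/
/-
STATEMENT 3: The squares S⁺_{n,k} are pairwise disjoint: if (n,k) ≠ (m,j) with
n,m ∈ ℕ and k,j ∈ ℤ, then S⁺_{n,k} ∩ S⁺_{m,j} = ∅.
-/

noncomputable section

/-- γ_{n,k}(z) = 2^{−n}(z + k). -/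
def gammaMap (n : ℕ) (k : ℤ) (z : ℂ) : ℂ := (2 : ℂ) ^ (-(n : ℤ)) * (z + (k : ℂ))

/-- The square S⁺_{0,0} = {z : |Re z| ≤ 3/10, |Im z − 1| ≤ 3/10}. -/
def Sp00 : Set ℂ := {z : ℂ | |z.re| ≤ 3 / 10 ∧ |z.im - 1| ≤ 3 / 10}

/-- S⁺_{n,k} = γ_{n,k}(S⁺_{0,0}). -/
def Sp (n : ℕ) (k : ℤ) : Set ℂ := gammaMap n k '' Sp00

/-! Multiplying by `2 ^ n` moves `S⁺_{n,k}` back to the translate `S⁺_{0,0} + k`. Its imaginary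
parts then fill `[7/10, 13/10]`, an interval shorter than a factor of two, which pins down the
level `n`; its real parts fill an interval of length `3/5 < 1` around `k`, which pins down `k`. -/

lemma gammaMap_eq_iff {n : ℕ} {k : ℤ} {w z : ℂ} : gammaMap n k w = z ↔ w = 2 ^ n * z - k := by
  rw [gammaMap, zpow_neg, zpow_natCast, inv_mul_eq_iff_eq_mul₀ (by simp), eq_sub_iff_add_eq,
    eq_comm]

lemma mem_Sp_iff {n : ℕ} {k : ℤ} {z : ℂ} :
    z ∈ Sp n k ↔ |2 ^ n * z.re - k| ≤ 3 / 10 ∧ |2 ^ n * z.im - 1| ≤ 3 / 10 := by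
  have h2n : (2 : ℂ) ^ n = ((2 ^ n : ℝ) : ℂ) := by push_cast; rfl
  simp only [Sp, Set.mem_image, gammaMap_eq_iff, exists_eq_right, h2n]
  simp only [Sp00, Set.mem_ofPred_eq, Complex.sub_re, Complex.sub_im, Complex.re_ofReal_mul,
    Complex.im_ofReal_mul, Complex.intCast_re, Complex.intCast_im, sub_zero]

lemma eq_of_abs_two_pow_mul_sub_one_le {y r : ℝ} {n m : ℕ} (hr : r < 1 / 3)
    (hn : |2 ^ n * y - 1| ≤ r) (hm : |2 ^ m * y - 1| ≤ r) : n = m := by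
  wlog hle : n ≤ m generalizing n m
  · exact (this hm hn (le_of_not_ge hle)).symm
  by_contra hne
  have hpow : 2 * 2 ^ n ≤ (2 : ℝ) ^ m := by
    rw [← pow_succ']; exact pow_le_pow_right₀ one_le_two (lt_of_le_of_ne hle hne)
  rw [abs_le] at hn hm
  have hy : 0 < y := pos_of_mul_pos_right (by linarith) (by positivity : (0 : ℝ) ≤ 2 ^ n)
  nlinarith

lemma Int.eq_of_abs_sub_le {x r : ℝ} {k j : ℤ} (hr : r < 1 / 2)
    (hk : |x - k| ≤ r) (hj : |x - j| ≤ r) : k = j := by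
  have hdist : |((k - j : ℤ) : ℝ)| < 1 :=
    calc |((k - j : ℤ) : ℝ)| = |(x - j) - (x - k)| := by push_cast; congr 1; ring
      _ ≤ |x - j| + |x - k| := abs_sub _ _
      _ < 1 := by linarith
  rw [← Int.cast_abs, ← Int.cast_one, Int.cast_lt, Int.abs_lt_one_iff] at hdist
  omega

theorem squares_pairwise_disjoint :
    ∀ (n m : ℕ) (k j : ℤ), (n, k) ≠ (m, j) → Sp n k ∩ Sp m j = ∅ := by
  intro n m k j hne
  refine Set.eq_empty_of_forall_notMem fun z ⟨hzn, hzm⟩ => hne ?_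
  obtain ⟨hren, himn⟩ := mem_Sp_iff.mp hzn
  obtain ⟨hrem, himm⟩ := mem_Sp_iff.mp hzm
  obtain rfl : n = m := eq_of_abs_two_pow_mul_sub_one_le (by norm_num) himn himm
  obtain rfl : k = j := Int.eq_of_abs_sub_le (by norm_num) hren hrem
  rfl

end
end

section
/- For every n ∈ ℕ and every x₀ ∈ ℝ, the one-dimensional Lebesgue measure of the set {y ∈ ℝ : x₀ + iy ∈ K_n} is at least (4/7)·2^{-n}, where K_n = K⁺_n ∪ K⁻_n; in particular there is b > 1 (e.g. b = 7/2) such that this measure is at least b^{-n} for all n ≥ 1. -/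
/-
STATEMENT 13: For every n ∈ ℕ and every x₀ ∈ ℝ, the one-dimensional Lebesgue
measure of {y : x₀ + iy ∈ K_n} is at least (4/7)·2^{−n}, where K_n = K⁺_n ∪ K⁻_n;
in particular there is b > 1 (e.g. b = 7/2, any b with b^{−n} ≤ (4/7)·2^{−n} for
all n ≥ 1) such that this measure is at least b^{−n} for all n ≥ 1.
-/
noncomputable section

open Set

/-- K⁺_{0,0} = {z : |Re z| ≤ 2/7, |Im z − 1| ≤ 2/7}. -/
def Kp00 : Set ℂ := {z : ℂ | |z.re| ≤ 2 / 7 ∧ |z.im - 1| ≤ 2 / 7}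

/-- K⁻_{0,0} = {z : |Re z − 1/2| ≤ 2/7, |Im z + 1| ≤ 2/7}. -/
def Km00 : Set ℂ := {z : ℂ | |z.re - 1 / 2| ≤ 2 / 7 ∧ |z.im + 1| ≤ 2 / 7}

/-- K⁺_n = ⋃_k γ_{n,k}(K⁺_{0,0}). -/
def KpU (n : ℕ) : Set ℂ := ⋃ (k : ℤ), gammaMap n k '' Kp00

/-- K⁻_n = ⋃_k γ_{n,k}(K⁻_{0,0}). -/
def KmU (n : ℕ) : Set ℂ := ⋃ (k : ℤ), gammaMap n k '' Km00

/-- K_n = K⁺_n ∪ K⁻_n. -/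
def KU (n : ℕ) : Set ℂ := KpU n ∪ KmU n


lemma mem_gamma_image (n : ℕ) (k : ℤ) (x₀ y : ℝ) (S : Set ℂ)
    (h : (⟨(2:ℝ)^n * x₀ - k, (2:ℝ)^n * y⟩ : ℂ) ∈ S) :
    (x₀ : ℂ) + (y : ℂ) * Complex.I ∈ gammaMap n k '' S := by
  refine ⟨_, h, ?_⟩
  have h2 : ((2:ℂ) ^ (-(n:ℤ))) * (2:ℂ)^(n:ℕ) = 1 := by
    rw [← zpow_natCast (2:ℂ) n, ← zpow_add₀ (by norm_num : (2:ℂ) ≠ 0)]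
    simp
  simp only [gammaMap, Complex.mk_eq_add_mul_I]
  push_cast
  linear_combination ((x₀ : ℂ) + (y : ℂ) * Complex.I) * h2

lemma interval_sub (n : ℕ) (x₀ : ℝ) :
    ∃ a : ℝ, Icc a (a + 4/7 * (2:ℝ)^(-(n:ℤ))) ⊆
      {y : ℝ | (x₀ : ℂ) + (y : ℂ) * Complex.I ∈ KU n} := by
  set t := (2:ℝ)^n * x₀ with ht
  set k := round t with hk
  have hf : |t - k| ≤ 1/2 := abs_sub_round t
  rw [abs_le] at hf
  have hpow : (0:ℝ) < (2:ℝ)^n := by positivity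
  have he : (2:ℝ)^n * (2:ℝ)^(-(n:ℤ)) = 1 := by
    rw [← zpow_natCast (2:ℝ) n, ← zpow_add₀ (by norm_num : (2:ℝ) ≠ 0)]
    simp
  rcases le_or_gt (t - k) (2/7) with h1 | h1
  · rcases le_or_gt (-(2/7)) (t - k) with h2 | h2
    · -- Kp with k
      refine ⟨5/7 * (2:ℝ)^(-(n:ℤ)), fun y hy => ?_⟩
      obtain ⟨hy1, hy2⟩ := hy
      refine Or.inl (mem_iUnion.2 ⟨k, mem_gamma_image n k x₀ y _ ?_⟩)
      refine ⟨by rw [abs_le]; constructor <;> linarith, ?_⟩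
      rw [abs_le]
      constructor <;> nlinarith
    · -- Km with k - 1
      refine ⟨-(9/7) * (2:ℝ)^(-(n:ℤ)), fun y hy => ?_⟩
      obtain ⟨hy1, hy2⟩ := hy
      refine Or.inr (mem_iUnion.2 ⟨k - 1, mem_gamma_image n (k-1) x₀ y _ ?_⟩)
      constructor
      · push_cast
        rw [abs_le]
        constructor <;> simp <;> linarith
      · rw [abs_le]
        constructor <;> nlinarith
  · -- Km with k
    refine ⟨-(9/7) * (2:ℝ)^(-(n:ℤ)), fun y hy => ?_⟩
    obtain ⟨hy1, hy2⟩ := hy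
    refine Or.inr (mem_iUnion.2 ⟨k, mem_gamma_image n k x₀ y _ ?_⟩)
    constructor
    · rw [abs_le]
      constructor <;> simp <;> linarith
    · rw [abs_le]
      constructor <;> nlinarith

theorem vertical_section_measure_lower_bound :
    (∀ (n : ℕ) (x₀ : ℝ),
      MeasureTheory.volume {y : ℝ | (x₀ : ℂ) + (y : ℂ) * Complex.I ∈ KU n} ≥
        ENNReal.ofReal (4 / 7 * (2:ℝ) ^ (-(n : ℤ)))) ∧
    (∃ b : ℝ, 1 < b ∧ ∀ n : ℕ, 1 ≤ n → ∀ x₀ : ℝ,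
      MeasureTheory.volume {y : ℝ | (x₀ : ℂ) + (y : ℂ) * Complex.I ∈ KU n} ≥
        ENNReal.ofReal (b ^ (-(n : ℤ)))) := by
  have main : ∀ (n : ℕ) (x₀ : ℝ),
      MeasureTheory.volume {y : ℝ | (x₀ : ℂ) + (y : ℂ) * Complex.I ∈ KU n} ≥
        ENNReal.ofReal (4 / 7 * (2:ℝ) ^ (-(n : ℤ))) := by
    intro n x₀
    obtain ⟨a, ha⟩ := interval_sub n x₀
    calc MeasureTheory.volume {y : ℝ | (x₀ : ℂ) + (y : ℂ) * Complex.I ∈ KU n}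
        ≥ MeasureTheory.volume (Icc a (a + 4/7 * (2:ℝ)^(-(n:ℤ)))) :=
          MeasureTheory.measure_mono ha
      _ = ENNReal.ofReal (4 / 7 * (2:ℝ) ^ (-(n : ℤ))) := by
          rw [Real.volume_Icc]; ring_nf
  refine ⟨main, ⟨7/2, by norm_num, fun n hn x₀ => ?_⟩⟩
  refine le_trans (ENNReal.ofReal_le_ofReal ?_) (main n x₀)
  have h1 : ((7:ℝ)/2) ^ (-(n:ℤ)) = (2/7:ℝ)^n := by
    rw [zpow_neg, ← zpow_natCast, ← inv_zpow]
    norm_num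
  have h2 : ((2:ℝ)) ^ (-(n:ℤ)) = (1/2:ℝ)^n := by
    rw [zpow_neg, ← zpow_natCast, ← inv_zpow]
    norm_num
  rw [h1, h2]
  have h5 : (2/7:ℝ)^n = (4/7:ℝ)^n * (1/2:ℝ)^n := by
    rw [← mul_pow]; norm_num
  rw [h5]
  have h3 : (4/7:ℝ)^n ≤ 4/7 := by
    calc (4/7:ℝ)^n ≤ (4/7:ℝ)^1 := pow_le_pow_of_le_one (by norm_num) (by norm_num) hn
      _ = 4/7 := pow_one _
  have h4 : (0:ℝ) ≤ (1/2:ℝ)^n := by positivity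
  nlinarith

end
end
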